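/- On L²([0,1]^d): (i) the operators 𝐓(𝐈 − 𝐏)𝐓(𝐈 − 𝐏)𝐓*(𝐈 − 𝐏)𝐓* (the covariance operator of the left-integrated centered pinned Brownian sheet 𝐁^{0}) and (𝐈 − 𝐏)𝐓(𝐈 − 𝐏)𝐓𝐓*(𝐈 − 𝐏)𝐓*(𝐈 − 𝐏) (the covariance operator of the centered left-integrated centered Brownian sheet) have the same nonzero eigenvalues with multiplicities; (ii) likewise, 𝐓*(𝐈 − 𝐏)𝐓(𝐈 − 𝐏)𝐓*(𝐈 − 𝐏)𝐓 and (𝐈 − 𝐏)𝐓*(𝐈 − 𝐏)𝐓𝐓*(𝐈 − 𝐏)𝐓(𝐈 − 𝐏) (the right-integrated versions) have the same nonzero eigenvalues with multiplicities. -/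

import Mathlib

open MeasureTheory

noncomputable section

/-- Lebesgue measure on the cube `[0,1]^d`, as a measure on `ℝ^d`. -/
def cubeMeasure (d : ℕ) : Measure (Fin d → ℝ) :=
  Measure.pi fun _ => volume.restrict (Set.Icc (0:ℝ) 1)

/-- `A` and `B` have the same nonzero eigenvalues with multiplicities. -/
def SameNonzeroEigenvalues {H : Type*} [NormedAddCommGroup H] [NormedSpace ℂ H]
    (A B : H →L[ℂ] H) : Prop :=
  ∀ l : ℂ, l ≠ 0 → ∀ m : ℕ, 1 ≤ m →
    Module.rank ℂ (LinearMap.ker (((A - l • 1) ^ m : H →L[ℂ] H) : H →ₗ[ℂ] H)) =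
    Module.rank ℂ (LinearMap.ker (((B - l • 1) ^ m : H →L[ℂ] H) : H →ₗ[ℂ] H))

/-!
Both parts rest on the fact that `A * B` and `B * A` have the same nonzero eigenvalues with
multiplicities: for `λ ≠ 0`, `B` maps the generalized `λ`-eigenspaces of `A * B` injectively into
those of `B * A`. Write `Q = 𝐈 - 𝐏`, an idempotent. In (ii) the two operators are
`(𝐓*Q𝐓Q)(Q𝐓*Q𝐓)` and the reversed product. In (i) the reflection `x ↦ 1 - x` of the cube induces
an involution `J` of `L²` with `J𝐓J = 𝐓*` and `J𝐏J = 𝐏`; two cyclic rotations take the first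
operator to `(Q𝐓*Q)(𝐓*𝐓Q𝐓Q)`, which is the `J`-conjugate of the second.
-/

local infix:50 " ∼ " => SameNonzeroEigenvalues

namespace SameNonzeroEigenvalues

variable {H : Type*} [NormedAddCommGroup H] [NormedSpace ℂ H]

theorem trans {A B C : H →L[ℂ] H} (hAB : SameNonzeroEigenvalues A B)
    (hBC : SameNonzeroEigenvalues B C) : SameNonzeroEigenvalues A C :=
  fun l hl m hm => (hAB l hl m hm).trans (hBC l hl m hm)

instance : @Trans (H →L[ℂ] H) (H →L[ℂ] H) (H →L[ℂ] H)
    SameNonzeroEigenvalues SameNonzeroEigenvalues SameNonzeroEigenvalues :=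
  ⟨trans⟩

theorem rank_ker_mul_sub_smul_pow_le (A B : H →L[ℂ] H) {l : ℂ} (hl : l ≠ 0) (m : ℕ) :
    Module.rank ℂ (LinearMap.ker (((A * B - l • 1) ^ m : H →L[ℂ] H) : H →ₗ[ℂ] H)) ≤
    Module.rank ℂ (LinearMap.ker (((B * A - l • 1) ^ m : H →L[ℂ] H) : H →ₗ[ℂ] H)) := by
  have hsemiconj : SemiconjBy B ((A * B - l • 1) ^ m) ((B * A - l • 1) ^ m) := by
    refine SemiconjBy.pow_right ?_ m
    simp only [SemiconjBy, mul_sub, sub_mul, mul_assoc, mul_smul_comm, smul_mul_assoc, mul_one,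
      one_mul]
  have hmaps : ∀ v ∈ LinearMap.ker (((A * B - l • 1) ^ m : H →L[ℂ] H) : H →ₗ[ℂ] H),
      B v ∈ LinearMap.ker (((B * A - l • 1) ^ m : H →L[ℂ] H) : H →ₗ[ℂ] H) := by
    intro v hv
    simp only [LinearMap.mem_ker, ContinuousLinearMap.coe_coe] at hv ⊢
    rw [← mul_apply_eq_comp, ← hsemiconj.eq, mul_apply_eq_comp, hv, map_zero]
  refine LinearMap.rank_le_of_injective (LinearMap.restrict (B : H →ₗ[ℂ] H) hmaps) ?_
  rw [injective_iff_map_eq_zero]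
  rintro ⟨v, hv⟩ hBv
  have hBv : B v = 0 := congrArg Subtype.val hBv
  have hstep : (A * B - l • 1) v = (-l) • v := by simp [hBv]
  have hpow : ∀ n : ℕ, ((A * B - l • 1) ^ n) v = (-l) ^ n • v := by
    intro n
    induction n with
    | zero => simp
    | succ n ih => rw [pow_succ, mul_apply_eq_comp, hstep, map_smul, ih, smul_smul,
        ← pow_succ']
  rw [LinearMap.mem_ker, ContinuousLinearMap.coe_coe, hpow] at hv
  exact Subtype.ext ((smul_eq_zero.mp hv).resolve_left (pow_ne_zero _ (neg_ne_zero.mpr hl)))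

theorem mul_comm (A B : H →L[ℂ] H) : SameNonzeroEigenvalues (A * B) (B * A) :=
  fun _ hl m _ => le_antisymm (rank_ker_mul_sub_smul_pow_le A B hl m)
    (rank_ker_mul_sub_smul_pow_le B A hl m)

theorem conj_involution {J : H →L[ℂ] H} (hJ : J * J = 1) (A : H →L[ℂ] H) :
    SameNonzeroEigenvalues (J * A * J) A :=
  calc J * A * J ∼ J * (J * A) := mul_comm (J * A) J
    _ = A := by rw [← _root_.mul_assoc, hJ, one_mul]

end SameNonzeroEigenvalues

section

variable {H : Type*} [NormedAddCommGroup H] [NormedSpace ℂ H]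

theorem sameNonzeroEigenvalues_mul_centered {T T' Q : H →L[ℂ] H} (hQ : IsIdempotentElem Q) :
    T' * Q * T * Q * T' * Q * T ∼ Q * T' * Q * T * T' * Q * T * Q :=
  calc T' * Q * T * Q * T' * Q * T = (T' * Q * T * Q) * (Q * T' * Q * T) := by
        simp only [mul_assoc, hQ.mul_self_mul]
    _ ∼ (Q * T' * Q * T) * (T' * Q * T * Q) := .mul_comm _ _
    _ = Q * T' * Q * T * T' * Q * T * Q := by simp only [mul_assoc]

theorem sameNonzeroEigenvalues_mul_centered_of_involution {T T' Q J : H →L[ℂ] H}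
    (hQ : IsIdempotentElem Q) (hJ : J * J = 1) (hJT : J * T * J = T') (hJQ : J * Q * J = Q) :
    T * Q * T * Q * T' * Q * T' ∼ Q * T * Q * T * T' * Q * T' * Q := by
  have hJJ : ∀ X, J * (J * X) = X := fun X => by rw [← mul_assoc, hJ, one_mul]
  have hJmul : ∀ X Y, J * (X * Y) * J = (J * X * J) * (J * Y * J) := fun X Y => by
    simp only [mul_assoc, hJJ]
  have hJT' : J * T' * J = T := by simp only [← hJT, mul_assoc, hJJ, hJ, mul_one]
  calc T * Q * T * Q * T' * Q * T' ∼ T' * (T * Q * T * Q * T' * Q) := .mul_comm _ _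
    _ = (T' * T * Q * T * Q) * (Q * T' * Q) := by simp only [mul_assoc, hQ.mul_self_mul]
    _ ∼ (Q * T' * Q) * (T' * T * Q * T * Q) := .mul_comm _ _
    _ = J * (Q * T * Q * T * T' * Q * T' * Q) * J := by
        simp only [hJmul, hJT, hJT', hJQ, mul_assoc]
    _ ∼ Q * T * Q * T * T' * Q * T' * Q := .conj_involution hJ _

end

open scoped ENNReal

namespace MeasureTheory.Lp

variable {α E : Type*} [MeasurableSpace α] {μ : Measure α} [NormedAddCommGroup E]
  [NormedSpace ℂ E] {p : ℝ≥0∞} [Fact (1 ≤ p)]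

theorem compMeasurePreservingₗᵢ_mul_self {σ : α → α} (hσ : MeasurePreserving σ μ μ)
    (hσσ : Function.Involutive σ) :
    ((compMeasurePreservingₗᵢ ℂ σ hσ).toContinuousLinearMap : Lp E p μ →L[ℂ] Lp E p μ) *
      (compMeasurePreservingₗᵢ ℂ σ hσ).toContinuousLinearMap = 1 := by
  ext1 u
  change compMeasurePreserving σ hσ (compMeasurePreserving σ hσ u) = u
  rw [← compMeasurePreserving_comp_apply]
  convert compMeasurePreserving_id_apply u
  exact hσσ.comp_self

theorem compMeasurePreservingₗᵢ_conj_eq {σ : α ≃ᵐ α} (hσ : MeasurePreserving σ μ μ)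
    {A B : Lp E p μ →L[ℂ] Lp E p μ} {S R : α → Set α} (hSR : ∀ x, σ ⁻¹' R x = S (σ x))
    (hA : ∀ u : Lp E p μ, A u =ᵐ[μ] fun x => ∫ y in S x, u y ∂μ)
    (hB : ∀ u : Lp E p μ, B u =ᵐ[μ] fun x => ∫ y in R x, u y ∂μ) :
    (compMeasurePreservingₗᵢ ℂ σ hσ).toContinuousLinearMap * A *
      (compMeasurePreservingₗᵢ ℂ σ hσ).toContinuousLinearMap = B := by
  ext1 u
  set J : Lp E p μ →L[ℂ] Lp E p μ := (compMeasurePreservingₗᵢ ℂ σ hσ).toContinuousLinearMap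
  have hJ : ∀ v : Lp E p μ, J v =ᵐ[μ] v ∘ σ := fun v => coeFn_compMeasurePreserving v hσ
  have hintegral : ∀ x, ∫ y in S (σ x), J u y ∂μ = ∫ y in R x, u y ∂μ := fun x => by
    rw [integral_congr_ae (ae_restrict_of_ae (hJ u)), ← hSR]
    exact hσ.setIntegral_preimage_emb σ.measurableEmbedding _ _
  refine Lp.ext ((hJ _).trans ?_)
  filter_upwards [hσ.quasiMeasurePreserving.ae_eq_comp (hA (J u)), hB u] with x hAx hBx
  exact hAx.trans ((hintegral x).trans hBx.symm)

theorem isIdempotentElem_of_ae_eq_integral [IsProbabilityMeasure μ] [CompleteSpace E]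
    {P : Lp E p μ →L[ℂ] Lp E p μ} (hP : ∀ u : Lp E p μ, P u =ᵐ[μ] fun _ => ∫ y, u y ∂μ) :
    IsIdempotentElem P := by
  ext1 u
  have hmean : ∫ y, P u y ∂μ = ∫ y, u y ∂μ := by
    rw [integral_congr_ae (hP u), integral_const, probReal_univ, one_smul]
  refine Lp.ext ?_
  filter_upwards [hP (P u), hP u] with x hPPx hPx
  rw [mul_apply_eq_comp, hPPx, hmean, hPx]

end MeasureTheory.Lp

instance (d : ℕ) : IsProbabilityMeasure (cubeMeasure d) := by
  have : IsProbabilityMeasure (volume.restrict (Set.Icc (0 : ℝ) 1)) := ⟨by simp⟩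
  unfold cubeMeasure
  infer_instance

theorem cubeMeasure_eq_restrict (d : ℕ) : cubeMeasure d = volume.restrict (Set.Icc 0 1) := by
  rw [cubeMeasure, ← Measure.restrict_pi_pi, Set.pi_univ_Icc, volume_pi]
  rfl

theorem measurePreserving_subLeft_one_cubeMeasure (d : ℕ) :
    MeasurePreserving (MeasurableEquiv.subLeft (1 : Fin d → ℝ)) (cubeMeasure d)
      (cubeMeasure d) := by
  have h := (Measure.measurePreserving_sub_left volume (1 : Fin d → ℝ)).restrict_preimage
    (measurableSet_Icc (a := 0) (b := 1))
  rwa [Set.preimage_const_sub_Icc, sub_self, sub_zero, ← cubeMeasure_eq_restrict] at h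

theorem preimage_subLeft_one_Icc_one {d : ℕ} (x : Fin d → ℝ) :
    MeasurableEquiv.subLeft (1 : Fin d → ℝ) ⁻¹' Set.Icc x 1 = Set.Icc 0 (1 - x) := by
  change (fun y => 1 - y) ⁻¹' Set.Icc x 1 = _
  rw [Set.preimage_const_sub_Icc, sub_self]

theorem statement16_general (d : ℕ)
    (T Tstar P : Lp ℂ 2 (cubeMeasure d) →L[ℂ] Lp ℂ 2 (cubeMeasure d))
    (hT : ∀ u : Lp ℂ 2 (cubeMeasure d), ∀ᵐ x ∂(cubeMeasure d),
      T u x = ∫ y in Set.Icc 0 x, u y ∂(cubeMeasure d))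
    (hTstar : ∀ u : Lp ℂ 2 (cubeMeasure d), ∀ᵐ x ∂(cubeMeasure d),
      Tstar u x = ∫ y in Set.Icc x 1, u y ∂(cubeMeasure d))
    (hP : ∀ u : Lp ℂ 2 (cubeMeasure d), ∀ᵐ x ∂(cubeMeasure d),
      P u x = ∫ y, u y ∂(cubeMeasure d)) :
    SameNonzeroEigenvalues
      (T * (1 - P) * T * (1 - P) * Tstar * (1 - P) * Tstar)
      ((1 - P) * T * (1 - P) * T * Tstar * (1 - P) * Tstar * (1 - P)) ∧
    SameNonzeroEigenvalues
      (Tstar * (1 - P) * T * (1 - P) * Tstar * (1 - P) * T)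
      ((1 - P) * Tstar * (1 - P) * T * Tstar * (1 - P) * T * (1 - P)) := by
  have hσ := measurePreserving_subLeft_one_cubeMeasure d
  set J : Lp ℂ 2 (cubeMeasure d) →L[ℂ] Lp ℂ 2 (cubeMeasure d) :=
    (Lp.compMeasurePreservingₗᵢ ℂ _ hσ).toContinuousLinearMap
  have hJ : J * J = 1 := Lp.compMeasurePreservingₗᵢ_mul_self hσ (sub_sub_cancel 1)
  have hJT : J * T * J = Tstar :=
    Lp.compMeasurePreservingₗᵢ_conj_eq hσ (S := (Set.Icc 0 ·)) (R := (Set.Icc · 1))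
      preimage_subLeft_one_Icc_one hT hTstar
  have hP' : ∀ u : Lp ℂ 2 (cubeMeasure d),
      P u =ᵐ[cubeMeasure d] fun _ => ∫ y in Set.univ, u y ∂(cubeMeasure d) := by
    simp only [Measure.restrict_univ]
    exact hP
  have hJP : J * P * J = P := Lp.compMeasurePreservingₗᵢ_conj_eq hσ (fun _ => rfl) hP' hP'
  have hQ : IsIdempotentElem (1 - P) := (Lp.isIdempotentElem_of_ae_eq_integral hP).one_sub
  have hJQ : J * (1 - P) * J = 1 - P := by rw [mul_sub, sub_mul, mul_one, hJ, hJP]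
  exact ⟨sameNonzeroEigenvalues_mul_centered_of_involution hQ hJ hJT hJQ,
    sameNonzeroEigenvalues_mul_centered hQ⟩

/-- On `L²([0,1]^d)`: (i) `𝐓(𝐈-𝐏)𝐓(𝐈-𝐏)𝐓*(𝐈-𝐏)𝐓*` (covariance of the left-integrated
centered pinned Brownian sheet) and `(𝐈-𝐏)𝐓(𝐈-𝐏)𝐓𝐓*(𝐈-𝐏)𝐓*(𝐈-𝐏)` (covariance of
the centered left-integrated centered Brownian sheet) have the same nonzero eigenvalues
with multiplicities; (ii) likewise for the right-integrated versions
`𝐓*(𝐈-𝐏)𝐓(𝐈-𝐏)𝐓*(𝐈-𝐏)𝐓` and `(𝐈-𝐏)𝐓*(𝐈-𝐏)𝐓𝐓*(𝐈-𝐏)𝐓(𝐈-𝐏)`. -/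
theorem statement16 (d : ℕ) (hd : 1 ≤ d)
    (T Tstar P : Lp ℂ 2 (cubeMeasure d) →L[ℂ] Lp ℂ 2 (cubeMeasure d))
    (hT : ∀ u : Lp ℂ 2 (cubeMeasure d), ∀ᵐ x ∂(cubeMeasure d),
      T u x = ∫ y in Set.Icc 0 x, u y ∂(cubeMeasure d))
    (hTstar : ∀ u : Lp ℂ 2 (cubeMeasure d), ∀ᵐ x ∂(cubeMeasure d),
      Tstar u x = ∫ y in Set.Icc x 1, u y ∂(cubeMeasure d))
    (hP : ∀ u : Lp ℂ 2 (cubeMeasure d), ∀ᵐ x ∂(cubeMeasure d),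
      P u x = ∫ y, u y ∂(cubeMeasure d)) :
    SameNonzeroEigenvalues
      (T * (1 - P) * T * (1 - P) * Tstar * (1 - P) * Tstar)
      ((1 - P) * T * (1 - P) * T * Tstar * (1 - P) * Tstar * (1 - P)) ∧
    SameNonzeroEigenvalues
      (Tstar * (1 - P) * T * (1 - P) * Tstar * (1 - P) * T)
      ((1 - P) * Tstar * (1 - P) * T * Tstar * (1 - P) * T * (1 - P)) :=
  statement16_general d T Tstar P hT hTstar hP
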